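/- arXiv:1410.5176 — 2 statements merged into one kernel-verified Lean document; each statement's English description precedes it below -/
import Mathlib

section
/- Let f : [a,b] → ℝ be a C² function with finitely many stationary points, all in (a,b), and with nonzero second derivative at each stationary point. Let k be the number of local minima and l the number of local maxima of f. For the equidistant n-partition points p_i = a + i(b-a)/n (i = 1,…,n−1), assume f(p_i) ≠ f(p_{i+1}) for all i. Then for all sufficiently large n, exactly k of the points p_1,…,p_{n−1} satisfy f(p_i) < min{f(p_{i−1}), f(p_{i+1})}, and exactly l satisfy f(p_i) > max{f(p_{i−1}), f(p_{i+1})}. -/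
open Set Filter Topology


variable {a b : ℝ} {f : ℝ → ℝ}

lemma aux_hasDerivAt (hf : ContDiffOn ℝ 2 f (Icc a b))
    {x : ℝ} (hx : x ∈ Ioo a b) : HasDerivAt f (deriv f x) x := by
  have h1 : DifferentiableOn ℝ f (Ioo a b) :=
    (hf.differentiableOn (by norm_num)).mono Ioo_subset_Icc_self
  exact (h1.differentiableAt (isOpen_Ioo.mem_nhds hx)).hasDerivAt

lemma aux_contDeriv (hf : ContDiffOn ℝ 2 f (Icc a b)) :
    ContinuousOn (deriv f) (Ioo a b) :=
  (hf.mono Ioo_subset_Icc_self).continuousOn_deriv_of_isOpen isOpen_Ioo (by norm_num)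

lemma aux_hasDerivAt2 (hf : ContDiffOn ℝ 2 f (Icc a b))
    {x : ℝ} (hx : x ∈ Ioo a b) : HasDerivAt (deriv f) (deriv (deriv f) x) x := by
  have h1 : ContDiffOn ℝ 1 (deriv f) (Ioo a b) :=
    (hf.mono Ioo_subset_Icc_self).deriv_of_isOpen isOpen_Ioo (by norm_num)
  exact ((h1.differentiableOn (by norm_num)).differentiableAt (isOpen_Ioo.mem_nhds hx)).hasDerivAt

lemma aux_sign_const (hf : ContDiffOn ℝ 2 f (Icc a b)) {u v : ℝ} (hu : a ≤ u) (hv : v ≤ b)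
    (hfree : ∀ y ∈ Ioo u v, deriv f y ≠ 0) {s t : ℝ} (hs : s ∈ Ioo u v) (ht : t ∈ Ioo u v)
    (hspos : 0 < deriv f s) : 0 < deriv f t := by
  by_contra h
  have htneg : deriv f t < 0 := lt_of_le_of_ne (not_lt.1 h) (hfree t ht)
  have hsub : uIcc s t ⊆ Ioo u v := Set.ordConnected_Ioo.uIcc_subset hs ht
  have hsub2 : Ioo u v ⊆ Ioo a b := Ioo_subset_Ioo hu hv
  have hcont : ContinuousOn (deriv f) (uIcc s t) :=
    (aux_contDeriv hf).mono (hsub.trans hsub2)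
  have h0 : (0:ℝ) ∈ uIcc (deriv f s) (deriv f t) := by
    rw [mem_uIcc]; exact Or.inr ⟨htneg.le, hspos.le⟩
  obtain ⟨z, hz, hz0⟩ := intermediate_value_uIcc hcont h0
  exact hfree z (hsub hz) hz0

lemma aux_mono (hf : ContDiffOn ℝ 2 f (Icc a b)) {u v : ℝ} (hu : a ≤ u) (hv : v ≤ b)
    (hpos : ∀ y ∈ Ioo u v, 0 < deriv f y) : StrictMonoOn f (Icc u v) :=
  strictMonoOn_of_deriv_pos (convex_Icc u v) (hf.continuousOn.mono (Icc_subset_Icc hu hv))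
    (by rwa [interior_Icc])

lemma aux_anti (hf : ContDiffOn ℝ 2 f (Icc a b)) {u v : ℝ} (hu : a ≤ u) (hv : v ≤ b)
    (hneg : ∀ y ∈ Ioo u v, deriv f y < 0) : StrictAntiOn f (Icc u v) :=
  strictAntiOn_of_deriv_neg (convex_Icc u v) (hf.continuousOn.mono (Icc_subset_Icc hu hv))
    (by rwa [interior_Icc])

lemma aux_ev_pos (hf : ContDiffOn ℝ 2 f (Icc a b)) {x : ℝ} (hx : x ∈ Ioo a b)
    (h0 : deriv f x = 0) (hc : 0 < deriv (deriv f) x) :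
    ∀ᶠ t in 𝓝[≠] x, (t < x → deriv f t < 0) ∧ (x < t → 0 < deriv f t) := by
  have h := hasDerivAt_iff_tendsto_slope.1 (aux_hasDerivAt2 hf hx)
  have h2 : ∀ᶠ t in 𝓝[≠] x, 0 < slope (deriv f) x t := h.eventually (eventually_gt_nhds hc)
  filter_upwards [h2] with t ht
  rw [slope_def_field, h0, sub_zero] at ht
  constructor
  · intro htx
    rcases div_pos_iff.1 ht with ⟨h1, h2⟩ | ⟨h1, h2⟩
    · linarith
    · linarith
  · intro htx
    rcases div_pos_iff.1 ht with ⟨h1, h2⟩ | ⟨h1, h2⟩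
    · linarith
    · linarith

lemma aux_ev_neg (hf : ContDiffOn ℝ 2 f (Icc a b)) {x : ℝ} (hx : x ∈ Ioo a b)
    (h0 : deriv f x = 0) (hc : deriv (deriv f) x < 0) :
    ∀ᶠ t in 𝓝[≠] x, (t < x → 0 < deriv f t) ∧ (x < t → deriv f t < 0) := by
  have h := hasDerivAt_iff_tendsto_slope.1 (aux_hasDerivAt2 hf hx)
  have h2 : ∀ᶠ t in 𝓝[≠] x, slope (deriv f) x t < 0 := h.eventually (eventually_lt_nhds hc)
  filter_upwards [h2] with t ht
  rw [slope_def_field, h0, sub_zero] at ht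
  constructor
  · intro htx
    rcases div_neg_iff.1 ht with ⟨h1, h2⟩ | ⟨h1, h2⟩
    · linarith
    · linarith
  · intro htx
    rcases div_neg_iff.1 ht with ⟨h1, h2⟩ | ⟨h1, h2⟩
    · linarith
    · linarith

lemma aux_neg_left (hf : ContDiffOn ℝ 2 f (Icc a b)) {x u : ℝ} (hx : x ∈ Ioo a b)
    (h0 : deriv f x = 0) (h2 : 0 < deriv (deriv f) x) (hu : a ≤ u) (hux : u < x)
    (hfree : ∀ y ∈ Ioo u x, deriv f y ≠ 0) : ∀ y ∈ Ioo u x, deriv f y < 0 := by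
  have hev := (aux_ev_pos hf hx h0 h2).filter_mono
    (nhdsWithin_mono x (fun y (hy : y ∈ Iio x) => ne_of_lt hy))
  have hmem : Ioo u x ∈ 𝓝[<] x := Ioo_mem_nhdsLT_of_mem ⟨hux, le_refl x⟩
  obtain ⟨t, ht, htm⟩ := (hev.and (eventually_of_mem hmem (fun y hy => hy))).exists
  have htneg : deriv f t < 0 := ht.1 htm.2
  intro y hy
  by_contra hcon
  have hypos : 0 < deriv f y := lt_of_le_of_ne (not_lt.1 hcon) (Ne.symm (hfree y hy))
  exact absurd (aux_sign_const hf hu hx.2.le hfree hy htm hypos) (not_lt.2 htneg.le)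

lemma aux_pos_right (hf : ContDiffOn ℝ 2 f (Icc a b)) {x v : ℝ} (hx : x ∈ Ioo a b)
    (h0 : deriv f x = 0) (h2 : 0 < deriv (deriv f) x) (hv : v ≤ b) (hxv : x < v)
    (hfree : ∀ y ∈ Ioo x v, deriv f y ≠ 0) : ∀ y ∈ Ioo x v, 0 < deriv f y := by
  have hev := (aux_ev_pos hf hx h0 h2).filter_mono
    (nhdsWithin_mono x (fun y (hy : y ∈ Ioi x) => ne_of_gt hy))
  have hmem : Ioo x v ∈ 𝓝[>] x := Ioo_mem_nhdsGT_of_mem ⟨le_refl x, hxv⟩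
  obtain ⟨t, ht, htm⟩ := (hev.and (eventually_of_mem hmem (fun y hy => hy))).exists
  have htpos : 0 < deriv f t := ht.2 htm.1
  intro y hy
  exact aux_sign_const hf hx.1.le hv hfree htm hy htpos

lemma aux_pos_left (hf : ContDiffOn ℝ 2 f (Icc a b)) {x u : ℝ} (hx : x ∈ Ioo a b)
    (h0 : deriv f x = 0) (h2 : deriv (deriv f) x < 0) (hu : a ≤ u) (hux : u < x)
    (hfree : ∀ y ∈ Ioo u x, deriv f y ≠ 0) : ∀ y ∈ Ioo u x, 0 < deriv f y := by
  have hev := (aux_ev_neg hf hx h0 h2).filter_mono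
    (nhdsWithin_mono x (fun y (hy : y ∈ Iio x) => ne_of_lt hy))
  have hmem : Ioo u x ∈ 𝓝[<] x := Ioo_mem_nhdsLT_of_mem ⟨hux, le_refl x⟩
  obtain ⟨t, ht, htm⟩ := (hev.and (eventually_of_mem hmem (fun y hy => hy))).exists
  have htpos : 0 < deriv f t := ht.1 htm.2
  intro y hy
  exact aux_sign_const hf hu hx.2.le hfree htm hy htpos

lemma aux_neg_right (hf : ContDiffOn ℝ 2 f (Icc a b)) {x v : ℝ} (hx : x ∈ Ioo a b)
    (h0 : deriv f x = 0) (h2 : deriv (deriv f) x < 0) (hv : v ≤ b) (hxv : x < v)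
    (hfree : ∀ y ∈ Ioo x v, deriv f y ≠ 0) : ∀ y ∈ Ioo x v, deriv f y < 0 := by
  have hev := (aux_ev_neg hf hx h0 h2).filter_mono
    (nhdsWithin_mono x (fun y (hy : y ∈ Ioi x) => ne_of_gt hy))
  have hmem : Ioo x v ∈ 𝓝[>] x := Ioo_mem_nhdsGT_of_mem ⟨le_refl x, hxv⟩
  obtain ⟨t, ht, htm⟩ := (hev.and (eventually_of_mem hmem (fun y hy => hy))).exists
  have htneg : deriv f t < 0 := ht.2 htm.1
  intro y hy
  by_contra hcon
  have hypos : 0 < deriv f y := lt_of_le_of_ne (not_lt.1 hcon) (Ne.symm (hfree y hy))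
  exact absurd (aux_sign_const hf hx.1.le hv hfree hy htm hypos) (not_lt.2 htneg.le)

lemma aux_isMin (hf : ContDiffOn ℝ 2 f (Icc a b)) {x : ℝ} (hx : x ∈ Ioo a b)
    (h0 : deriv f x = 0) (h2 : 0 < deriv (deriv f) x) : IsLocalMin f x := by
  obtain ⟨ε, hε, hball⟩ := Metric.eventually_nhds_iff.1 (eventually_nhdsWithin_iff.1 (aux_ev_pos hf hx h0 h2))
  set ε' := min (ε/2) (min ((x - a)/2) ((b - x)/2)) with hε'
  have hε'pos : 0 < ε' := by
    simp only [hε', lt_min_iff]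
    exact ⟨by linarith, by constructor <;> [linarith [hx.1]; linarith [hx.2]]⟩
  have hε'ε : ε' < ε := lt_of_le_of_lt (min_le_left _ _) (by linarith)
  have hxa : a ≤ x - ε' := by
    have : ε' ≤ (x - a)/2 := le_trans (min_le_right _ _) (min_le_left _ _)
    linarith [hx.1]
  have hxb : x + ε' ≤ b := by
    have : ε' ≤ (b - x)/2 := le_trans (min_le_right _ _) (min_le_right _ _)
    linarith [hx.2]
  have hanti : StrictAntiOn f (Icc (x - ε') x) := by
    apply aux_anti hf hxa hx.2.le
    intro y hy
    refine (hball ?_ (by simpa using ne_of_lt hy.2)).1 hy.2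
    rw [Real.dist_eq, abs_of_nonpos (by linarith [hy.2.le])]
    linarith [hy.1]
  have hmono : StrictMonoOn f (Icc x (x + ε')) := by
    apply aux_mono hf hx.1.le hxb
    intro y hy
    refine (hball ?_ (by simpa using ne_of_gt hy.1)).2 hy.1
    rw [Real.dist_eq, abs_of_nonneg (by linarith [hy.1.le])]
    linarith [hy.2]
  have : Icc (x - ε') (x + ε') ∈ 𝓝 x := Icc_mem_nhds (by linarith) (by linarith)
  filter_upwards [this] with y hy
  rcases lt_trichotomy y x with h | h | h
  · exact le_of_lt (hanti ⟨hy.1, h.le⟩ ⟨by linarith, le_refl x⟩ h)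
  · exact le_of_eq (by rw [h])
  · exact le_of_lt (hmono ⟨le_refl x, le_refl x |>.trans (by linarith)⟩ ⟨h.le, hy.2⟩ h)

lemma aux_notMax (hf : ContDiffOn ℝ 2 f (Icc a b)) {x : ℝ} (hx : x ∈ Ioo a b)
    (h0 : deriv f x = 0) (hmin : IsLocalMin f x) : ¬ deriv (deriv f) x < 0 := by
  intro h2
  obtain ⟨ε, hε, hball⟩ := Metric.eventually_nhds_iff.1 (eventually_nhdsWithin_iff.1 (aux_ev_neg hf hx h0 h2))
  obtain ⟨δ, hδ, hδf⟩ := Metric.eventually_nhds_iff.1 hmin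
  set ε' := min (ε/2) (min (δ/2) ((b - x)/2)) with hε'
  have hε'pos : 0 < ε' := by
    simp only [hε', lt_min_iff]
    exact ⟨by linarith, by constructor <;> [linarith; linarith [hx.2]]⟩
  have hxb : x + ε' ≤ b := by
    have : ε' ≤ (b - x)/2 := le_trans (min_le_right _ _) (min_le_right _ _)
    linarith [hx.2]
  have hanti : StrictAntiOn f (Icc x (x + ε')) := by
    apply aux_anti hf hx.1.le hxb
    intro y hy
    refine (hball ?_ (by simpa using ne_of_gt hy.1)).2 hy.1
    rw [Real.dist_eq, abs_of_nonneg (by linarith [hy.1.le])]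
    have : ε' ≤ ε/2 := min_le_left _ _
    linarith [hy.2]
  have h1 : f (x + ε') < f x := hanti ⟨le_refl x, by linarith⟩ ⟨by linarith, le_refl _⟩ (by linarith)
  have h2' : f x ≤ f (x + ε') := by
    apply hδf
    rw [Real.dist_eq, abs_of_nonneg (by linarith)]
    have : ε' ≤ δ/2 := le_trans (min_le_right _ _) (min_le_left _ _)
    linarith
  linarith

lemma aux_class (hf : ContDiffOn ℝ 2 f (Icc a b))
    (hint : ∀ x ∈ Icc a b, deriv f x = 0 → x ∈ Ioo a b)
    (hnd : ∀ x ∈ Icc a b, deriv f x = 0 → deriv (deriv f) x ≠ 0) :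
    {x ∈ Ioo a b | IsLocalMin f x} =
      {x ∈ Icc a b | deriv f x = 0 ∧ 0 < deriv (deriv f) x} := by
  ext x
  simp only [mem_setOf_eq]
  constructor
  · rintro ⟨hx, hmin⟩
    have h0 : deriv f x = 0 := hmin.deriv_eq_zero
    have hIcc : x ∈ Icc a b := Ioo_subset_Icc_self hx
    refine ⟨hIcc, h0, ?_⟩
    rcases (hnd x hIcc h0).lt_or_gt with hlt | hgt
    · exact absurd hlt (aux_notMax hf hx h0 hmin)
    · exact hgt
  · rintro ⟨hIcc, h0, h2⟩
    have hx := hint x hIcc h0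
    exact ⟨hx, aux_isMin hf hx h0 h2⟩

lemma count_min (a b : ℝ) (hab : a < b) (f : ℝ → ℝ)
    (hf : ContDiffOn ℝ 2 f (Icc a b))
    (hfin : {x ∈ Icc a b | deriv f x = 0}.Finite)
    (hint : ∀ x ∈ Icc a b, deriv f x = 0 → x ∈ Ioo a b)
    (hnd : ∀ x ∈ Icc a b, deriv f x = 0 → deriv (deriv f) x ≠ 0)
    (k : ℕ) (hk : {x ∈ Ioo a b | IsLocalMin f x}.ncard = k) :
    ∃ N : ℕ, ∀ n ≥ N,
      (∀ i < n, f (a + (i : ℝ) * (b - a) / n) ≠ f (a + ((i : ℝ) + 1) * (b - a) / n)) →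
      ((Finset.Ico 1 n).filter (fun i : ℕ =>
          f (a + (i : ℝ) * (b - a) / n) < min (f (a + ((i : ℝ) - 1) * (b - a) / n))
            (f (a + ((i : ℝ) + 1) * (b - a) / n)))).card = k := by
  classical
  set S : Finset ℝ := hfin.toFinset with hSdef
  have hSmem : ∀ x, x ∈ S ↔ x ∈ Icc a b ∧ deriv f x = 0 := by
    intro x; rw [hSdef, Set.Finite.mem_toFinset]; rfl
  have hSIoo : ∀ x ∈ S, x ∈ Ioo a b := fun x hx =>
    hint x ((hSmem x).1 hx).1 ((hSmem x).1 hx).2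
  set Smin : Finset ℝ := S.filter (fun x => 0 < deriv (deriv f) x) with hSm
  have hkcard : Smin.card = k := by
    have h1 : {x ∈ Ioo a b | IsLocalMin f x} = ↑Smin := by
      rw [aux_class hf hint hnd]
      ext x
      simp only [hSm, Finset.coe_filter, mem_setOf_eq, hSmem, mem_sep_iff]
      tauto
    rw [h1, Set.ncard_coe_finset] at hk
    exact hk
  set T : Finset ℝ := insert a (insert b S) with hT
  have haT : a ∈ T := Finset.mem_insert_self _ _
  have hbT : b ∈ T := Finset.mem_insert_of_mem (Finset.mem_insert_self _ _)
  have hST : ∀ x ∈ S, x ∈ T := fun x hx =>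
    Finset.mem_insert_of_mem (Finset.mem_insert_of_mem hx)
  set D : Finset ℝ := ((T ×ˢ T).filter (fun q => q.1 ≠ q.2)).image (fun q => |q.1 - q.2|)
    with hD
  have hDne : D.Nonempty := ⟨|a - b|, Finset.mem_image.2 ⟨(a, b),
    Finset.mem_filter.2 ⟨Finset.mk_mem_product haT hbT, hab.ne⟩, rfl⟩⟩
  set d : ℝ := D.min' hDne with hd
  have hdpos : 0 < d := by
    have hm := D.min'_mem hDne
    rw [← hd] at hm
    obtain ⟨q, hq, hqe⟩ := Finset.mem_image.1 hm
    rw [← hqe]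
    exact abs_pos.2 (sub_ne_zero.2 (Finset.mem_filter.1 hq).2)
  have hgap : ∀ x ∈ T, ∀ y ∈ T, x ≠ y → d ≤ |x - y| := by
    intro x hx y hy hxy
    exact Finset.min'_le _ _ (Finset.mem_image.2 ⟨(x, y),
      Finset.mem_filter.2 ⟨Finset.mk_mem_product hx hy, hxy⟩, rfl⟩)
  have hdba : d ≤ b - a := by
    have := hgap a haT b hbT hab.ne
    rwa [abs_sub_comm, abs_of_pos (sub_pos.2 hab)] at this
  refine ⟨⌈3 * (b - a) / d⌉₊ + 1, ?_⟩
  intro n hn hdist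
  have hba : 0 < b - a := sub_pos.2 hab
  have hceil3 : 3 ≤ ⌈3 * (b - a) / d⌉₊ := by
    by_contra hcon
    push_neg at hcon
    have h2 : ⌈3 * (b - a) / d⌉₊ ≤ 2 := by omega
    have := (Nat.ceil_le).1 h2
    have h3 : 3 * (b - a) / d ≤ 2 := by exact_mod_cast this
    rw [div_le_iff₀ hdpos] at h3
    linarith
  have hn4 : 4 ≤ n := le_trans (by omega) hn
  have hn0 : 0 < n := by omega
  have hnR : (0:ℝ) < n := Nat.cast_pos.2 hn0
  set h : ℝ := (b - a) / n with hh
  have hhpos : 0 < h := div_pos hba hnR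
  have h3h : 3 * h < d := by
    have h1 : 3 * (b - a) / d < n := by
      have := Nat.le_ceil (3 * (b - a) / d)
      have h2 : (⌈3 * (b - a) / d⌉₊ : ℝ) < n := by exact_mod_cast Nat.lt_of_succ_le hn
      linarith
    rw [div_lt_iff₀ hdpos] at h1
    have he : 3 * h = 3 * (b - a) / n := by rw [hh]; ring
    rw [he, div_lt_iff₀ hnR]
    linarith
  set p : ℕ → ℝ := fun i => a + i * (b - a) / n with hp
  have hpi : ∀ i : ℕ, p i = a + i * h := by
    intro i; simp only [hp, hh]; ring
  have hpmono : StrictMono p := by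
    intro i j hij
    rw [hpi, hpi]
    have hc : (i:ℝ) < j := Nat.cast_lt.2 hij
    nlinarith
  have hstep : ∀ i : ℕ, p (i+1) = p i + h := by
    intro i; rw [hpi, hpi]; push_cast; ring
  have hp0 : p 0 = a := by rw [hpi]; simp
  have hpn : p n = b := by
    have hnne : (n:ℝ) ≠ 0 := ne_of_gt hnR
    rw [hpi, hh]; field_simp; ring
  have hpa : ∀ i, a ≤ p i := by
    intro i; rw [hpi]
    have : (0:ℝ) ≤ i * h := by positivity
    linarith
  have hpb : ∀ i, i ≤ n → p i ≤ b := by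
    intro i hi
    calc p i ≤ p n := hpmono.monotone hi
    _ = b := hpn
  set σ : ℕ → Prop := fun s => f (p s) < f (p (s+1)) with hσ
  have hne : ∀ s, s < n → f (p s) ≠ f (p (s+1)) := by
    intro s hs
    have := hdist s hs
    simp only [hp]
    push_cast
    exact this
  -- condition rewriting
  have hcond : ∀ j : ℕ, 1 ≤ j → j < n →
      ((f (a + (j : ℝ) * (b - a) / n) < min (f (a + ((j : ℝ) - 1) * (b - a) / n))
        (f (a + ((j : ℝ) + 1) * (b - a) / n))) ↔ (¬ σ (j-1) ∧ σ j)) := by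
    intro j h1 h2
    have e3 : (j - 1) + 1 = j := Nat.sub_add_cancel h1
    have e1 : a + ((j : ℝ) - 1) * (b - a) / n = p (j - 1) := by
      simp only [hp]
      rw [Nat.cast_sub h1]
      push_cast
      ring
    have e2 : a + ((j : ℝ) + 1) * (b - a) / n = p (j + 1) := by
      simp only [hp]; push_cast; ring
    have e0 : a + (j : ℝ) * (b - a) / n = p j := by simp only [hp]
    rw [e0, e1, e2, lt_min_iff]
    have hne' := hne (j-1) (lt_of_le_of_lt (Nat.sub_le _ _) h2)
    rw [e3] at hne'
    constructor
    · rintro ⟨hl, hr⟩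
      refine ⟨?_, hr⟩
      simp only [hσ, e3]
      exact not_lt.2 hl.le
    · rintro ⟨hl, hr⟩
      simp only [hσ, e3] at hl
      exact ⟨lt_of_le_of_ne (not_lt.1 hl) hne'.symm, hr⟩
  -- free windows
  have hfreeL : ∀ x ∈ S, ∀ u, a ≤ u → x - u < d → ∀ y ∈ Ioo u x, deriv f y ≠ 0 := by
    intro x hx u hu hxu y hy hy0
    have hyIcc : y ∈ Icc a b := ⟨hu.trans hy.1.le, hy.2.le.trans (hSIoo x hx).2.le⟩
    have hyS : y ∈ S := (hSmem y).2 ⟨hyIcc, hy0⟩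
    have hgap' := hgap y (hST y hyS) x (hST x hx) (ne_of_lt hy.2)
    rw [abs_sub_comm, abs_of_pos (sub_pos.2 hy.2)] at hgap'
    linarith [hy.1]
  have hfreeR : ∀ x ∈ S, ∀ v, v ≤ b → v - x < d → ∀ y ∈ Ioo x v, deriv f y ≠ 0 := by
    intro x hx v hv hxv y hy hy0
    have hyIcc : y ∈ Icc a b := ⟨(hSIoo x hx).1.le.trans hy.1.le, hy.2.le.trans hv⟩
    have hyS : y ∈ S := (hSmem y).2 ⟨hyIcc, hy0⟩
    have hgap' := hgap y (hST y hyS) x (hST x hx) (ne_of_gt hy.1)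
    rw [abs_of_pos (sub_pos.2 hy.1)] at hgap'
    linarith [hy.2]
  -- the four sign facts
  have hA : ∀ x ∈ S, 0 < deriv (deriv f) x → ∀ s : ℕ, p (s+1) ≤ x → x - p s < d →
      f (p (s+1)) < f (p s) := by
    intro x hx h2 s hps hxd
    have hx0 : deriv f x = 0 := ((hSmem x).1 hx).2
    have hxI := hSIoo x hx
    have hlt : p s < p (s+1) := hpmono (Nat.lt_succ_self s)
    have hups : p s < x := lt_of_lt_of_le hlt hps
    have hfree := hfreeL x hx (p s) (hpa s) hxd
    have hneg := aux_neg_left hf hxI hx0 h2 (hpa s) hups hfree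
    have hanti := aux_anti hf (hpa s) hxI.2.le hneg
    exact hanti ⟨le_refl _, hups.le⟩ ⟨hlt.le, hps⟩ hlt
  have hB : ∀ x ∈ S, 0 < deriv (deriv f) x → ∀ s : ℕ, s + 1 ≤ n → x ≤ p s →
      p (s+1) - x < d → f (p s) < f (p (s+1)) := by
    intro x hx h2 s hsn hxs hxd
    have hx0 : deriv f x = 0 := ((hSmem x).1 hx).2
    have hxI := hSIoo x hx
    have hlt : p s < p (s+1) := hpmono (Nat.lt_succ_self s)
    have hxv : x < p (s+1) := lt_of_le_of_lt hxs hlt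
    have hfree := hfreeR x hx (p (s+1)) (hpb _ hsn) hxd
    have hpos := aux_pos_right hf hxI hx0 h2 (hpb _ hsn) hxv hfree
    have hmono := aux_mono hf hxI.1.le (hpb _ hsn) hpos
    exact hmono ⟨hxs, hlt.le.trans (le_refl _)⟩ ⟨hxv.le, le_refl _⟩ hlt
  have hC : ∀ x ∈ S, deriv (deriv f) x < 0 → ∀ s : ℕ, p (s+1) ≤ x → x - p s < d →
      f (p s) < f (p (s+1)) := by
    intro x hx h2 s hps hxd
    have hx0 : deriv f x = 0 := ((hSmem x).1 hx).2
    have hxI := hSIoo x hx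
    have hlt : p s < p (s+1) := hpmono (Nat.lt_succ_self s)
    have hups : p s < x := lt_of_lt_of_le hlt hps
    have hfree := hfreeL x hx (p s) (hpa s) hxd
    have hpos := aux_pos_left hf hxI hx0 h2 (hpa s) hups hfree
    have hmono := aux_mono hf (hpa s) hxI.2.le hpos
    exact hmono ⟨le_refl _, hups.le⟩ ⟨hlt.le, hps⟩ hlt
  have hDD : ∀ x ∈ S, deriv (deriv f) x < 0 → ∀ s : ℕ, s + 1 ≤ n → x ≤ p s →
      p (s+1) - x < d → f (p (s+1)) < f (p s) := by
    intro x hx h2 s hsn hxs hxd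
    have hx0 : deriv f x = 0 := ((hSmem x).1 hx).2
    have hxI := hSIoo x hx
    have hlt : p s < p (s+1) := hpmono (Nat.lt_succ_self s)
    have hxv : x < p (s+1) := lt_of_le_of_lt hxs hlt
    have hfree := hfreeR x hx (p (s+1)) (hpb _ hsn) hxd
    have hneg := aux_neg_right hf hxI hx0 h2 (hpb _ hsn) hxv hfree
    have hanti := aux_anti hf hxI.1.le (hpb _ hsn) hneg
    exact hanti ⟨hxs, hlt.le.trans (le_refl _)⟩ ⟨hxv.le, le_refl _⟩ hlt
  -- no stationary point in window: no sign change
  have hNC : ∀ i : ℕ, 1 ≤ i → i + 1 ≤ n → (∀ x ∈ S, x ∉ Ioo (p (i-1)) (p (i+1))) →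
      (σ (i-1) ↔ σ i) := by
    intro i h1 h2 hnos
    have e3 : (i - 1) + 1 = i := Nat.sub_add_cancel h1
    have hfree : ∀ y ∈ Ioo (p (i-1)) (p (i+1)), deriv f y ≠ 0 := by
      intro y hy hy0
      have hyIcc : y ∈ Icc a b := ⟨(hpa _).trans hy.1.le, hy.2.le.trans (hpb _ h2)⟩
      exact hnos y ((hSmem y).2 ⟨hyIcc, hy0⟩) hy
    have hii : i - 1 < i := Nat.sub_lt h1 one_pos
    have hii2 : i - 1 < i + 1 := by omega
    have hpi1 : p (i-1) < p i := hpmono hii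
    have hpi2 : p i < p (i+1) := hpmono (Nat.lt_succ_self i)
    have hpiw : p i ∈ Ioo (p (i-1)) (p (i+1)) := ⟨hpi1, hpi2⟩
    have hm1 : p (i-1) ∈ Icc (p (i-1)) (p (i+1)) := ⟨le_refl _, (hpmono hii2).le⟩
    have hm2 : p i ∈ Icc (p (i-1)) (p (i+1)) := ⟨hpi1.le, hpi2.le⟩
    have hm3 : p (i+1) ∈ Icc (p (i-1)) (p (i+1)) := ⟨(hpmono hii2).le, le_refl _⟩
    rcases (hfree (p i) hpiw).lt_or_gt with hneg | hpos
    · have hneg' : ∀ y ∈ Ioo (p (i-1)) (p (i+1)), deriv f y < 0 := by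
        intro y hy
        by_contra hcon
        have hypos : 0 < deriv f y := lt_of_le_of_ne (not_lt.1 hcon) (Ne.symm (hfree y hy))
        exact absurd (aux_sign_const hf (hpa _) (hpb _ h2) hfree hy hpiw hypos)
          (not_lt.2 hneg.le)
      have hanti := aux_anti hf (hpa (i-1)) (hpb _ h2) hneg'
      have d1 : f (p i) < f (p (i-1)) := hanti hm1 hm2 hpi1
      have d2 : f (p (i+1)) < f (p i) := hanti hm2 hm3 hpi2
      refine iff_of_false ?_ ?_
      · simp only [hσ, e3]; exact not_lt.2 d1.le
      · simp only [hσ]; exact not_lt.2 d2.le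
    · have hpos' : ∀ y ∈ Ioo (p (i-1)) (p (i+1)), 0 < deriv f y := by
        intro y hy
        exact aux_sign_const hf (hpa _) (hpb _ h2) hfree hpiw hy hpos
      have hmono := aux_mono hf (hpa (i-1)) (hpb _ h2) hpos'
      have d1 : f (p (i-1)) < f (p i) := hmono hm1 hm2 hpi1
      have d2 : f (p i) < f (p (i+1)) := hmono hm2 hm3 hpi2
      refine iff_of_true ?_ ?_
      · simp only [hσ, e3]; exact d1
      · simp only [hσ]; exact d2
  -- change implies unique stationary point in window
  have hU : ∀ i : ℕ, 1 ≤ i → ∀ x ∈ S, ∀ y ∈ S, x ∈ Ioo (p (i-1)) (p (i+1)) →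
      y ∈ Ioo (p (i-1)) (p (i+1)) → x = y := by
    intro i h1 x hx y hy hxw hyw
    by_contra hnexy
    have hgap' := hgap x (hST x hx) y (hST y hy) hnexy
    have e3 : (i - 1) + 1 = i := Nat.sub_add_cancel h1
    have s1 : p i = p (i-1) + h := by have := hstep (i-1); rwa [e3] at this
    have s2 : p (i+1) = p i + h := hstep i
    have habs : |x - y| < 2 * h := by
      rw [abs_sub_lt_iff]
      constructor <;> [linarith [hxw.2, hyw.1]; linarith [hyw.2, hxw.1]]
    linarith [habs, hgap', h3h, hhpos]
  have hexu : ∀ j : ℕ, 1 ≤ j → j < n → ¬ σ (j-1) → σ j →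
      ∃! x, x ∈ S ∧ x ∈ Ioo (p (j-1)) (p (j+1)) := by
    intro j h1 h2 hns hs
    have hch : ¬ (σ (j-1) ↔ σ j) := by tauto
    have hW : ∃ x ∈ S, x ∈ Ioo (p (j-1)) (p (j+1)) := by
      by_contra hcon
      push_neg at hcon
      exact hch (hNC j h1 h2 hcon)
    obtain ⟨x, hxS, hxw⟩ := hW
    exact ⟨x, ⟨hxS, hxw⟩, fun y hy => hU j h1 y hy.1 x hxS hy.2 hxw⟩
  set F := ((Finset.Ico 1 n).filter (fun i : ℕ =>
      f (a + (i : ℝ) * (b - a) / n) < min (f (a + ((i : ℝ) - 1) * (b - a) / n))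
        (f (a + ((i : ℝ) + 1) * (b - a) / n)))) with hF
  have hmemF : ∀ j, j ∈ F ↔ (1 ≤ j ∧ j < n ∧ ¬ σ (j-1) ∧ σ j) := by
    intro j
    rw [hF, Finset.mem_filter, Finset.mem_Ico]
    constructor
    · rintro ⟨⟨h1, h2⟩, hc⟩
      obtain ⟨ha1, ha2⟩ := (hcond j h1 h2).1 hc
      exact ⟨h1, h2, ha1, ha2⟩
    · rintro ⟨h1, h2, hc1, hc2⟩
      exact ⟨⟨h1, h2⟩, (hcond j h1 h2).2 ⟨hc1, hc2⟩⟩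
  have hmem' : ∀ j, j ∈ F → ∃! x, x ∈ S ∧ x ∈ Ioo (p (j-1)) (p (j+1)) := by
    intro j hj
    obtain ⟨h1, h2, hns, hs⟩ := (hmemF j).1 hj
    exact hexu j h1 h2 hns hs
  have hΦspec : ∀ j (hj : j ∈ F), ((hmem' j hj).exists.choose ∈ S ∧
      (hmem' j hj).exists.choose ∈ Ioo (p (j-1)) (p (j+1))) :=
    fun j hj => (hmem' j hj).exists.choose_spec
  have hwindow2h : ∀ j : ℕ, 1 ≤ j → p (j+1) = p (j-1) + 2 * h := by
    intro j h1
    have e3 : (j - 1) + 1 = j := Nat.sub_add_cancel h1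
    have s1 : p j = p (j-1) + h := by have := hstep (j-1); rwa [e3] at this
    have s2 : p (j+1) = p j + h := hstep j
    linarith
  have hinj : ∀ j1 (hj1 : j1 ∈ F), ∀ j2 (hj2 : j2 ∈ F), j1 < j2 →
      (hmem' j1 hj1).exists.choose ≠ (hmem' j2 hj2).exists.choose := by
    intro j1 hj1 j2 hj2 hlt heq
    obtain ⟨hS1, hw1⟩ := hΦspec j1 hj1
    obtain ⟨hS2, hw2⟩ := hΦspec j2 hj2
    rw [heq] at hw1
    obtain ⟨h11, h12, hns1, hs1⟩ := (hmemF j1).1 hj1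
    obtain ⟨h21, h22, hns2, hs2⟩ := (hmemF j2).1 hj2
    have hlt2 : p (j2 - 1) < p (j1 + 1) := lt_trans hw2.1 hw1.2
    have hord : j2 - 1 < j1 + 1 := hpmono.lt_iff_lt.1 hlt2
    have hj2e : j2 = j1 + 1 := by omega
    rw [hj2e] at hns2
    simp only [Nat.add_sub_cancel] at hns2
    exact hns2 hs1
  rw [← hkcard]
  apply Finset.card_bij (fun j hj => (hmem' j hj).exists.choose)
  · -- maps into Smin
    intro j hj
    obtain ⟨hxS, hxw⟩ := hΦspec j hj
    obtain ⟨h1, h2, hns, hs⟩ := (hmemF j).1 hj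
    set x := (hmem' j hj).exists.choose with hxdef
    refine Finset.mem_filter.2 ⟨hxS, ?_⟩
    have hx0 : deriv f x = 0 := ((hSmem x).1 hxS).2
    have hxIcc : x ∈ Icc a b := ((hSmem x).1 hxS).1
    have e3 : (j - 1) + 1 = j := Nat.sub_add_cancel h1
    have hwin := hwindow2h j h1
    rcases (hnd x hxIcc hx0).lt_or_gt with hmax | hmin
    · exfalso
      rcases le_or_gt x (p j) with hc | hc
      · have hres := hDD x hxS hmax j h2 hc (by linarith [hxw.1, hwin, h3h, hhpos])
        simp only [hσ] at hs
        linarith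
      · have hres := hC x hxS hmax (j-1) (by rw [e3]; exact hc.le)
          (by linarith [hxw.2, hwin, h3h, hhpos])
        rw [e3] at hres
        exact hns (by simp only [hσ, e3]; exact hres)
    · exact hmin
  · -- injective
    intro j1 hj1 j2 hj2 heq
    rcases lt_trichotomy j1 j2 with hlt | heqj | hgt
    · exact absurd heq (hinj j1 hj1 j2 hj2 hlt)
    · exact heqj
    · exact absurd heq.symm (hinj j2 hj2 j1 hj1 hgt)
  · -- surjective
    intro x hx
    obtain ⟨hxS, hxmin⟩ := Finset.mem_filter.1 hx
    have hx0 : deriv f x = 0 := ((hSmem x).1 hxS).2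
    have hxI := hSIoo x hxS
    have hdax : d ≤ x - a := by
      have := hgap a haT x (hST x hxS) (ne_of_lt hxI.1)
      rwa [abs_sub_comm, abs_of_pos (sub_pos.2 hxI.1)] at this
    have hdxb : d ≤ b - x := by
      have := hgap x (hST x hxS) b hbT (ne_of_lt hxI.2)
      rwa [abs_sub_comm, abs_of_pos (sub_pos.2 hxI.2)] at this
    set i0 : ℕ := ⌊(x - a) / h⌋₊ with hi0
    have hxanneg : 0 ≤ (x - a) / h := div_nonneg (by linarith [hxI.1]) hhpos.le
    have hfl1 : p i0 ≤ x := by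
      have hle : (i0 : ℝ) ≤ (x - a) / h := by
        rw [hi0]; exact Nat.floor_le hxanneg
      rw [hpi]
      have := (le_div_iff₀ hhpos).1 hle
      linarith
    have hfl2 : x < p (i0 + 1) := by
      have hlt : (x - a) / h < (i0 : ℝ) + 1 := by
        rw [hi0]; exact_mod_cast Nat.lt_floor_add_one ((x - a) / h)
      rw [div_lt_iff₀ hhpos] at hlt
      rw [hpi]
      push_cast
      linarith
    have h1i0 : 1 ≤ i0 := by
      rw [hi0]
      apply Nat.le_floor
      rw [le_div_iff₀ hhpos]
      push_cast
      linarith [h3h, hdax, hhpos]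
    have hi02n : i0 + 2 < n := by
      have hxb : p (i0 + 1) < p (n - 2) := by
        have hpn2 : p (n - 2) = b - 2 * h := by
          rw [hpi]
          have : ((n - 2 : ℕ) : ℝ) = (n : ℝ) - 2 := by
            push_cast [Nat.cast_sub (by omega : 2 ≤ n)]; ring
          rw [this]
          have hb : b = a + n * h := by rw [← hpn, hpi]
          rw [hb]; ring
        rw [hpn2]
        have : p (i0 + 1) ≤ x + h := by
          have := hstep i0
          linarith [hfl1]
        linarith [hdxb, h3h, hhpos]
      have := hpmono.lt_iff_lt.1 hxb
      omega
    have hA1 : f (p i0) < f (p (i0 - 1)) := by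
      have e3 : (i0 - 1) + 1 = i0 := Nat.sub_add_cancel h1i0
      have hwin := hwindow2h i0 h1i0
      have := hA x hxS hxmin (i0 - 1) (by rw [e3]; exact hfl1)
        (by linarith [hfl2, hwin, h3h, hhpos])
      rwa [e3] at this
    have hB1 : σ (i0 + 1) := by
      have := hB x hxS hxmin (i0 + 1) (by omega) hfl2.le
        (by
          have h1 := hstep (i0 + 1)
          have h2 := hstep i0
          linarith [hfl1, h3h, hhpos])
      simpa only [hσ] using this
    by_cases hs0 : σ i0
    · have hjF : i0 ∈ F := by
        rw [hmemF]
        refine ⟨h1i0, by omega, ?_, hs0⟩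
        have e3 : (i0 - 1) + 1 = i0 := Nat.sub_add_cancel h1i0
        simp only [hσ, e3]
        exact not_lt.2 hA1.le
      refine ⟨i0, hjF, ?_⟩
      have hwx : x ∈ Ioo (p (i0 - 1)) (p (i0 + 1)) :=
        ⟨lt_of_lt_of_le (hpmono (Nat.sub_lt h1i0 one_pos)) hfl1, hfl2⟩
      exact ((hmem' i0 hjF).unique (hΦspec i0 hjF) ⟨hxS, hwx⟩).symm ▸ rfl
    · have hxgt : p i0 < x := by
        rcases lt_or_eq_of_le hfl1 with hlt | heq
        · exact hlt
        · exfalso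
          apply hs0
          have := hB x hxS hxmin i0 (by omega) heq.ge
            (by have := hstep i0; linarith [h3h, hhpos])
          simpa only [hσ] using this
      have hjF : (i0 + 1) ∈ F := by
        rw [hmemF]
        refine ⟨by omega, by omega, ?_, hB1⟩
        simp only [Nat.add_sub_cancel]
        exact hs0
      refine ⟨i0 + 1, hjF, ?_⟩
      have hwx : x ∈ Ioo (p ((i0 + 1) - 1)) (p ((i0 + 1) + 1)) := by
        simp only [Nat.add_sub_cancel]
        exact ⟨hxgt, lt_trans hfl2 (hpmono (by omega))⟩
      exact (hmem' (i0+1) hjF).unique (hΦspec (i0+1) hjF) ⟨hxS, hwx⟩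


theorem discrete_equilibria_1d
    (a b : ℝ) (hab : a < b) (f : ℝ → ℝ)
    (hf : ContDiffOn ℝ 2 f (Icc a b))
    (hfin : {x ∈ Icc a b | deriv f x = 0}.Finite)
    (hint : ∀ x ∈ Icc a b, deriv f x = 0 → x ∈ Ioo a b)
    (hnd : ∀ x ∈ Icc a b, deriv f x = 0 → deriv (deriv f) x ≠ 0)
    (k l : ℕ)
    (hk : {x ∈ Ioo a b | IsLocalMin f x}.ncard = k)
    (hl : {x ∈ Ioo a b | IsLocalMax f x}.ncard = l) :
    ∃ N : ℕ, ∀ n ≥ N,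
      (∀ i < n, f (a + (i : ℝ) * (b - a) / n) ≠ f (a + ((i : ℝ) + 1) * (b - a) / n)) →
      ((Finset.Ico 1 n).filter (fun i : ℕ =>
          f (a + (i : ℝ) * (b - a) / n) < min (f (a + ((i : ℝ) - 1) * (b - a) / n))
            (f (a + ((i : ℝ) + 1) * (b - a) / n)))).card = k ∧
      ((Finset.Ico 1 n).filter (fun i : ℕ =>
          f (a + (i : ℝ) * (b - a) / n) > max (f (a + ((i : ℝ) - 1) * (b - a) / n))
            (f (a + ((i : ℝ) + 1) * (b - a) / n)))).card = l := by
  classical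
  obtain ⟨N1, hN1⟩ := count_min a b hab f hf hfin hint hnd k hk
  have hderneg : deriv (fun y => -f y) = fun y => -deriv f y := by
    funext y; exact deriv.neg
  have hfneg : ContDiffOn ℝ 2 (fun y => -f y) (Icc a b) := hf.neg
  have hsetzero : {x ∈ Icc a b | deriv (fun y => -f y) x = 0} =
      {x ∈ Icc a b | deriv f x = 0} := by
    ext x; simp [hderneg]
  have hfinneg : {x ∈ Icc a b | deriv (fun y => -f y) x = 0}.Finite := by
    rw [hsetzero]; exact hfin
  have hzeroiff : ∀ x, deriv (fun y => -f y) x = 0 → deriv f x = 0 := by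
    intro x h0; rw [hderneg] at h0; simpa using h0
  have hintneg : ∀ x ∈ Icc a b, deriv (fun y => -f y) x = 0 → x ∈ Ioo a b :=
    fun x hx h0 => hint x hx (hzeroiff x h0)
  have hd2neg : ∀ x, deriv (deriv (fun y => -f y)) x = - deriv (deriv f) x := by
    intro x; rw [hderneg]; exact deriv.neg
  have hndneg : ∀ x ∈ Icc a b, deriv (fun y => -f y) x = 0 →
      deriv (deriv (fun y => -f y)) x ≠ 0 := by
    intro x hx h0
    rw [hd2neg]
    simpa only [ne_eq, neg_eq_zero] using hnd x hx (hzeroiff x h0)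
  have hlneg : {x ∈ Ioo a b | IsLocalMin (fun y => -f y) x}.ncard = l := by
    have hset : {x ∈ Ioo a b | IsLocalMin (fun y => -f y) x} =
        {x ∈ Ioo a b | IsLocalMax f x} := by
      ext x
      simp only [mem_setOf_eq, and_congr_right_iff]
      intro _
      constructor
      · intro hmin
        simpa using hmin.neg
      · intro hmax
        exact hmax.neg
    rw [hset, hl]
  obtain ⟨N2, hN2⟩ := count_min a b hab (fun y => -f y) hfneg hfinneg hintneg hndneg l hlneg
  refine ⟨max N1 N2, fun n hn hdist => ?_⟩
  refine ⟨hN1 n (le_trans (le_max_left _ _) hn) hdist, ?_⟩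
  have hdist' : ∀ i < n, (fun y => -f y) (a + (i:ℝ)*(b-a)/n) ≠
      (fun y => -f y) (a + ((i:ℝ)+1)*(b-a)/n) := by
    intro i hi
    simp only [ne_eq, neg_inj]
    exact hdist i hi
  have hcard := hN2 n (le_trans (le_max_right _ _) hn) hdist'
  have hset : ((Finset.Ico 1 n).filter (fun i : ℕ =>
        (fun y => -f y) (a + (i : ℝ) * (b - a) / n) <
          min ((fun y => -f y) (a + ((i : ℝ) - 1) * (b - a) / n))
            ((fun y => -f y) (a + ((i : ℝ) + 1) * (b - a) / n)))) =
      ((Finset.Ico 1 n).filter (fun i : ℕ =>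
        f (a + (i : ℝ) * (b - a) / n) > max (f (a + ((i : ℝ) - 1) * (b - a) / n))
          (f (a + ((i : ℝ) + 1) * (b - a) / n)))) := by
    apply Finset.filter_congr
    intro i _
    simp only [lt_min_iff, gt_iff_lt, max_lt_iff, neg_lt_neg_iff]
  rw [hset] at hcard
  exact hcard
end

section
/- Let f : D → ℝ be C³ and p ∈ int D a nondegenerate saddle point of f. Then there exist a neighborhood U of p and an integer r such that for all sufficiently large n, every grid vertex q of D_n lying in U is neither minimal nor maximal within its grid circle C_r(q): there exist grid vertices q₁, q₂ ∈ C_r(q) with f(q₁) < f(q) < f(q₂). -/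
open Set

private lemma norm_le_coords (v : EuclideanSpace ℝ (Fin 2)) : ‖v‖ ≤ |v 0| + |v 1| := by
  rw [EuclideanSpace.norm_eq, Fin.sum_univ_two]
  have h0 : (0:ℝ) ≤ |v 0| + |v 1| := by positivity
  have h : ‖v 0‖ ^ 2 + ‖v 1‖ ^ 2 ≤ (|v 0| + |v 1|) ^ 2 := by
    rw [Real.norm_eq_abs, Real.norm_eq_abs]
    nlinarith [abs_nonneg (v 0), abs_nonneg (v 1)]
  calc Real.sqrt (‖v 0‖^2 + ‖v 1‖^2) ≤ Real.sqrt ((|v 0| + |v 1|)^2) := Real.sqrt_le_sqrt h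
    _ = |v 0| + |v 1| := Real.sqrt_sq h0

private lemma int_of_real_pos (A B C x : ℝ) (hx : 0 < A*x^2 + 2*B*x + C) :
    ∃ k l : ℤ, 0 < A*(k:ℝ)^2 + 2*B*((k:ℝ)*(l:ℝ)) + C*(l:ℝ)^2 := by
  have hcont : Continuous fun y : ℝ => A*y^2 + 2*B*y + C := by continuity
  have hopen : IsOpen {y : ℝ | 0 < A*y^2 + 2*B*y + C} := isOpen_lt continuous_const hcont
  obtain ⟨q, hq⟩ := (Rat.denseRange_cast (𝕜 := ℝ)).exists_mem_open hopen ⟨x, hx⟩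
  refine ⟨q.num, (q.den : ℤ), ?_⟩
  have hd : (0:ℝ) < (q.den : ℝ) := by exact_mod_cast q.pos
  have hcast : (q : ℝ) = (q.num : ℝ) / (q.den : ℝ) := by rw [Rat.cast_def]
  have hq' : 0 < A*(q:ℝ)^2 + 2*B*(q:ℝ) + C := hq
  have key : A*((q.num:ℤ):ℝ)^2 + 2*B*(((q.num:ℤ):ℝ)*(((q.den:ℤ)):ℝ)) + C*(((q.den:ℤ)):ℝ)^2
      = (q.den:ℝ)^2 * (A*(q:ℝ)^2 + 2*B*(q:ℝ) + C) := by
    rw [hcast]; push_cast; field_simp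
  rw [key]
  positivity

private lemma exists_int_pos (A B C : ℝ) (h : A*C - B^2 < 0) :
    ∃ k l : ℤ, 0 < A*(k:ℝ)^2 + 2*B*((k:ℝ)*(l:ℝ)) + C*(l:ℝ)^2 := by
  rcases lt_trichotomy A 0 with hA | hA | hA
  · apply int_of_real_pos A B C (-B/A)
    have hne : A ≠ 0 := ne_of_lt hA
    have h2 : A*(-B/A)^2 + 2*B*(-B/A) + C = (A*C - B^2)/A := by field_simp; ring
    rw [h2]
    exact div_pos_of_neg_of_neg h hA
  · subst hA
    rcases lt_trichotomy C 0 with hC | hC | hC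
    · obtain ⟨k, l, hkl⟩ := int_of_real_pos C B 0 (-B/C) (by
        have hne : C ≠ 0 := ne_of_lt hC
        have h2 : C*(-B/C)^2 + 2*B*(-B/C) + 0 = -B^2/C := by field_simp; ring
        rw [h2]
        have hB : B ≠ 0 := by intro h0; rw [h0] at h; simp at h
        have hB2 : 0 < B^2 := by positivity
        exact div_pos_of_neg_of_neg (by linarith) hC)
      exact ⟨l, k, by nlinarith [hkl]⟩
    · subst hC
      have hB : B ≠ 0 := by intro h0; rw [h0] at h; simp at h
      rcases lt_or_gt_of_ne hB with hB' | hB'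
      · exact ⟨1, -1, by push_cast; nlinarith⟩
      · exact ⟨1, 1, by push_cast; nlinarith⟩
    · exact ⟨0, 1, by push_cast; nlinarith⟩
  · exact ⟨1, 0, by push_cast; nlinarith⟩

private lemma exists_int_neg (A B C : ℝ) (h : A*C - B^2 < 0) :
    ∃ k l : ℤ, A*(k:ℝ)^2 + 2*B*((k:ℝ)*(l:ℝ)) + C*(l:ℝ)^2 < 0 := by
  obtain ⟨k, l, hkl⟩ := exists_int_pos (-A) (-B) (-C) (by nlinarith)
  exact ⟨k, l, by nlinarith⟩

private lemma symm_diff_pos (g g1 g2 : ℝ → ℝ)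
    (hg : ∀ t ∈ Ioo (-2:ℝ) 2, HasDerivAt g (g1 t) t)
    (hg1 : ∀ t ∈ Ioo (-2:ℝ) 2, HasDerivAt g1 (g2 t) t)
    (hpos : ∀ t ∈ Ioo (-2:ℝ) 2, 0 < g2 t) :
    2 * g 0 < g 1 + g (-1) := by
  have hsub : ∀ s t : ℝ, -1 ≤ s → t ≤ 1 → Icc s t ⊆ Ioo (-2:ℝ) 2 := by
    intro s t hs ht x hx
    exact ⟨by linarith [hx.1], by linarith [hx.2]⟩
  have contg : ∀ s t : ℝ, -1 ≤ s → t ≤ 1 → ContinuousOn g (Icc s t) := fun s t hs ht x hx =>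
    ((hg x (hsub s t hs ht hx)).continuousAt).continuousWithinAt
  obtain ⟨c₁, hc₁, hc₁'⟩ := exists_hasDerivAt_eq_slope g g1 (by norm_num : (0:ℝ) < 1)
    (contg 0 1 (by norm_num) le_rfl)
    (fun x hx => hg x (hsub 0 1 (by norm_num) le_rfl ⟨le_of_lt hx.1, le_of_lt hx.2⟩))
  obtain ⟨c₂, hc₂, hc₂'⟩ := exists_hasDerivAt_eq_slope g g1 (by norm_num : (-1:ℝ) < 0)
    (contg (-1) 0 le_rfl (by norm_num))
    (fun x hx => hg x (hsub (-1) 0 le_rfl (by norm_num) ⟨le_of_lt hx.1, le_of_lt hx.2⟩))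
  have hcc : c₂ < c₁ := lt_trans hc₂.2 hc₁.1
  have hIcc : Icc c₂ c₁ ⊆ Ioo (-2:ℝ) 2 := hsub c₂ c₁ (le_of_lt hc₂.1) (le_of_lt hc₁.2)
  obtain ⟨ξ, hξ, hξ'⟩ := exists_hasDerivAt_eq_slope g1 g2 hcc
    (fun x hx => ((hg1 x (hIcc hx)).continuousAt).continuousWithinAt)
    (fun x hx => hg1 x (hIcc ⟨le_of_lt hx.1, le_of_lt hx.2⟩))
  have hξpos : 0 < g2 ξ := hpos ξ (hIcc ⟨le_of_lt hξ.1, le_of_lt hξ.2⟩)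
  rw [hξ'] at hξpos
  have h1 : g1 c₁ = g 1 - g 0 := by rw [hc₁']; ring_nf
  have h2 : g1 c₂ = g 0 - g (-1) := by rw [hc₂']; ring_nf
  rcases div_pos_iff.mp hξpos with ⟨hnum, _⟩ | ⟨_, hden⟩
  · rw [h1, h2] at hnum; linarith
  · linarith

private lemma symm_diff_neg (g g1 g2 : ℝ → ℝ)
    (hg : ∀ t ∈ Ioo (-2:ℝ) 2, HasDerivAt g (g1 t) t)
    (hg1 : ∀ t ∈ Ioo (-2:ℝ) 2, HasDerivAt g1 (g2 t) t)
    (hneg : ∀ t ∈ Ioo (-2:ℝ) 2, g2 t < 0) :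
    g 1 + g (-1) < 2 * g 0 := by
  have h := symm_diff_pos (fun t => -g t) (fun t => -g1 t) (fun t => -g2 t)
    (fun t ht => (hg t ht).neg) (fun t ht => (hg1 t ht).neg)
    (fun t ht => neg_pos.mpr (hneg t ht))
  linarith

private lemma saddle_dir {E : Type*} [NormedAddCommGroup E] [NormedSpace ℝ E]
    (f : E → ℝ) (p q w : E) (ρ : ℝ)
    (hf1 : ∀ x ∈ Metric.ball p ρ, HasFDerivAt f (fderiv ℝ f x) x)
    (hf2 : ∀ x ∈ Metric.ball p ρ, HasFDerivAt (fderiv ℝ f) (fderiv ℝ (fderiv ℝ f) x) x)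
    (hQ : ∀ x ∈ Metric.ball p ρ, 0 < (fderiv ℝ (fderiv ℝ f) x) w w)
    (hqp : ‖q - p‖ + 2*‖w‖ < ρ) :
    f q < f (q + w) ∨ f q < f (q - w) := by
  have hball : ∀ t ∈ Ioo (-2:ℝ) 2, q + t • w ∈ Metric.ball p ρ := by
    intro t ht
    rw [Metric.mem_ball, dist_eq_norm]
    have h1 : q + t • w - p = (q - p) + t • w := by abel
    rw [h1]
    calc ‖(q - p) + t • w‖ ≤ ‖q - p‖ + ‖t • w‖ := norm_add_le _ _
      _ = ‖q - p‖ + |t| * ‖w‖ := by rw [norm_smul, Real.norm_eq_abs]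
      _ ≤ ‖q - p‖ + 2 * ‖w‖ := by
          have h2 : |t| ≤ 2 := by
            rw [abs_le]; exact ⟨le_of_lt ht.1, le_of_lt ht.2⟩
          nlinarith [norm_nonneg w]
      _ < ρ := hqp
  have hline : ∀ t : ℝ, HasDerivAt (fun s : ℝ => q + s • w) w t := by
    intro t
    have h := ((hasDerivAt_id t).smul_const w).const_add q
    simpa using h
  have hg : ∀ t ∈ Ioo (-2:ℝ) 2,
      HasDerivAt (fun s => f (q + s • w)) ((fderiv ℝ f (q + t • w)) w) t := by
    intro t ht
    exact (hf1 _ (hball t ht)).comp_hasDerivAt t (hline t)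
  have hg1 : ∀ t ∈ Ioo (-2:ℝ) 2,
      HasDerivAt (fun s => (fderiv ℝ f (q + s • w)) w)
        (((fderiv ℝ (fderiv ℝ f) (q + t • w)) w) w) t := by
    intro t ht
    have hin : HasDerivAt (fun s => fderiv ℝ f (q + s • w))
        ((fderiv ℝ (fderiv ℝ f) (q + t • w)) w) t :=
      (hf2 _ (hball t ht)).comp_hasDerivAt t (hline t)
    have h := (ContinuousLinearMap.apply ℝ ℝ w).hasFDerivAt.comp_hasDerivAt t hin
    exact h
  have key := symm_diff_pos (fun t => f (q + t • w)) _ _ hg hg1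
    (fun t ht => hQ _ (hball t ht))
  simp only [zero_smul, add_zero, one_smul, neg_one_smul, ← sub_eq_add_neg] at key
  by_contra hcon
  push_neg at hcon
  linarith [hcon.1, hcon.2]

private lemma saddle_dir_neg {E : Type*} [NormedAddCommGroup E] [NormedSpace ℝ E]
    (f : E → ℝ) (p q w : E) (ρ : ℝ)
    (hf1 : ∀ x ∈ Metric.ball p ρ, HasFDerivAt f (fderiv ℝ f x) x)
    (hf2 : ∀ x ∈ Metric.ball p ρ, HasFDerivAt (fderiv ℝ f) (fderiv ℝ (fderiv ℝ f) x) x)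
    (hQ : ∀ x ∈ Metric.ball p ρ, (fderiv ℝ (fderiv ℝ f) x) w w < 0)
    (hqp : ‖q - p‖ + 2*‖w‖ < ρ) :
    f (q + w) < f q ∨ f (q - w) < f q := by
  have hball : ∀ t ∈ Ioo (-2:ℝ) 2, q + t • w ∈ Metric.ball p ρ := by
    intro t ht
    rw [Metric.mem_ball, dist_eq_norm]
    have h1 : q + t • w - p = (q - p) + t • w := by abel
    rw [h1]
    calc ‖(q - p) + t • w‖ ≤ ‖q - p‖ + ‖t • w‖ := norm_add_le _ _
      _ = ‖q - p‖ + |t| * ‖w‖ := by rw [norm_smul, Real.norm_eq_abs]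
      _ ≤ ‖q - p‖ + 2 * ‖w‖ := by
          have h2 : |t| ≤ 2 := by
            rw [abs_le]; exact ⟨le_of_lt ht.1, le_of_lt ht.2⟩
          nlinarith [norm_nonneg w]
      _ < ρ := hqp
  have hline : ∀ t : ℝ, HasDerivAt (fun s : ℝ => q + s • w) w t := by
    intro t
    have h := ((hasDerivAt_id t).smul_const w).const_add q
    simpa using h
  have hg : ∀ t ∈ Ioo (-2:ℝ) 2,
      HasDerivAt (fun s => f (q + s • w)) ((fderiv ℝ f (q + t • w)) w) t := by
    intro t ht
    exact (hf1 _ (hball t ht)).comp_hasDerivAt t (hline t)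
  have hg1 : ∀ t ∈ Ioo (-2:ℝ) 2,
      HasDerivAt (fun s => (fderiv ℝ f (q + s • w)) w)
        (((fderiv ℝ (fderiv ℝ f) (q + t • w)) w) w) t := by
    intro t ht
    have hin : HasDerivAt (fun s => fderiv ℝ f (q + s • w))
        ((fderiv ℝ (fderiv ℝ f) (q + t • w)) w) t :=
      (hf2 _ (hball t ht)).comp_hasDerivAt t (hline t)
    have h := (ContinuousLinearMap.apply ℝ ℝ w).hasFDerivAt.comp_hasDerivAt t hin
    exact h
  have key := symm_diff_neg (fun t => f (q + t • w)) _ _ hg hg1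
    (fun t ht => hQ _ (hball t ht))
  simp only [zero_smul, add_zero, one_smul, neg_one_smul, ← sub_eq_add_neg] at key
  by_contra hcon
  push_neg at hcon
  linarith [hcon.1, hcon.2]

noncomputable def gridPt (a b : ℝ) (n i j : ℕ) : EuclideanSpace ℝ (Fin 2) :=
  WithLp.toLp 2 ![(i : ℝ) * a / n, (j : ℝ) * b / n]

private lemma grid_apply_zero (a b : ℝ) (n i j : ℕ) :
    gridPt a b n i j 0 = (i : ℝ) * a / n := rfl

private lemma grid_apply_one (a b : ℝ) (n i j : ℕ) :
    gridPt a b n i j 1 = (j : ℝ) * b / n := rfl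

private lemma grid_shift (a b : ℝ) (n i j : ℕ) (k l : ℤ)
    (hik : 0 ≤ (i:ℤ) + k) (hjl : 0 ≤ (j:ℤ) + l) :
    gridPt a b n ((i:ℤ)+k).toNat ((j:ℤ)+l).toNat
      = gridPt a b n i j + (((k:ℝ)*a/n) • EuclideanSpace.single (0 : Fin 2) (1:ℝ)
        + ((l:ℝ)*b/n) • EuclideanSpace.single (1 : Fin 2) (1:ℝ)) := by
  have hci : ((((i:ℤ)+k).toNat : ℕ) : ℝ) = (i:ℝ) + (k:ℝ) := by
    have h := Int.toNat_of_nonneg hik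
    have h2 : (((((i:ℤ)+k).toNat : ℕ) : ℤ) : ℝ) = (((i:ℤ) + k : ℤ) : ℝ) := by rw [h]
    push_cast at h2 ⊢
    linarith
  have hcj : ((((j:ℤ)+l).toNat : ℕ) : ℝ) = (j:ℝ) + (l:ℝ) := by
    have h := Int.toNat_of_nonneg hjl
    have h2 : (((((j:ℤ)+l).toNat : ℕ) : ℤ) : ℝ) = (((j:ℤ) + l : ℤ) : ℝ) := by rw [h]
    push_cast at h2 ⊢
    linarith
  ext x
  fin_cases x <;>
    simp [gridPt, PiLp.add_apply, PiLp.smul_apply, EuclideanSpace.single_apply, hci, hcj] <;>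
    ring

set_option maxHeartbeats 1000000 in
theorem no_extremal_grid_vertex_near_saddle
    (a b : ℝ) (ha : 0 < a) (hb : 0 < b)
    (D : Set (EuclideanSpace ℝ (Fin 2)))
    (hD : D = {v | v 0 ∈ Icc 0 a ∧ v 1 ∈ Icc 0 b})
    (f : EuclideanSpace ℝ (Fin 2) → ℝ) (hf : ContDiffOn ℝ 3 f D)
    (p : EuclideanSpace ℝ (Fin 2)) (hp : p ∈ interior D)
    (hcrit : fderiv ℝ f p = 0)
    (hsaddle :
      fderiv ℝ (fderiv ℝ f) p (EuclideanSpace.single 0 1) (EuclideanSpace.single 0 1) *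
        fderiv ℝ (fderiv ℝ f) p (EuclideanSpace.single 1 1) (EuclideanSpace.single 1 1) -
      fderiv ℝ (fderiv ℝ f) p (EuclideanSpace.single 0 1) (EuclideanSpace.single 1 1) *
        fderiv ℝ (fderiv ℝ f) p (EuclideanSpace.single 1 1) (EuclideanSpace.single 0 1)
      < 0)
    (hgrid : ∀ n : ℕ, 0 < n → ∀ i j l m : ℕ, i ≤ n → j ≤ n → l ≤ n → m ≤ n →
      (i, j) ≠ (l, m) → f (gridPt a b n i j) ≠ f (gridPt a b n l m)) :
    ∃ U ∈ nhds p, ∃ r : ℕ, ∃ N : ℕ, ∀ n ≥ N, ∀ i j : ℕ, i ≤ n → j ≤ n →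
      gridPt a b n i j ∈ U →
      (∃ l m : ℕ, l ≤ n ∧ m ≤ n ∧ |(l : ℤ) - i| ≤ r ∧ |(m : ℤ) - j| ≤ r ∧
        f (gridPt a b n l m) < f (gridPt a b n i j)) ∧
      (∃ l m : ℕ, l ≤ n ∧ m ≤ n ∧ |(l : ℤ) - i| ≤ r ∧ |(m : ℤ) - j| ≤ r ∧
        f (gridPt a b n i j) < f (gridPt a b n l m)) := by
  clear hgrid hcrit
  have hVopen : IsOpen (interior D) := isOpen_interior
  have hfV : ContDiffOn ℝ 3 f (interior D) := hf.mono interior_subset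
  have hD1 : ContDiffOn ℝ 2 (fderiv ℝ f) (interior D) :=
    hfV.fderiv_of_isOpen hVopen (by norm_num)
  have hD2 : ContDiffOn ℝ 1 (fderiv ℝ (fderiv ℝ f)) (interior D) :=
    hD1.fderiv_of_isOpen hVopen (by norm_num)
  have hf1 : ∀ x ∈ interior D, HasFDerivAt f (fderiv ℝ f x) x := fun x hx =>
    ((hfV.differentiableOn (by norm_num) x hx).differentiableAt (hVopen.mem_nhds hx)).hasFDerivAt
  have hf2 : ∀ x ∈ interior D, HasFDerivAt (fderiv ℝ f) (fderiv ℝ (fderiv ℝ f) x) x := fun x hx =>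
    ((hD1.differentiableOn (by norm_num) x hx).differentiableAt (hVopen.mem_nhds hx)).hasFDerivAt
  have hD2cont : ContinuousOn (fderiv ℝ (fderiv ℝ f)) (interior D) := hD2.continuousOn
  -- coordinates of p
  obtain ⟨ε₀, hε₀, hball₀⟩ := Metric.isOpen_iff.mp hVopen p hp
  have hmemD : ∀ v : EuclideanSpace ℝ (Fin 2), dist v p < ε₀ →
      v 0 ∈ Icc 0 a ∧ v 1 ∈ Icc 0 b := by
    intro v hv
    have h := interior_subset (hball₀ hv)
    rwa [hD] at h
  have hdist : ∀ (i : Fin 2) (c : ℝ),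
      dist (p + c • EuclideanSpace.single i (1:ℝ)) p = |c| := by
    intro i c
    rw [dist_self_add_left, norm_smul, EuclideanSpace.norm_single, norm_one,
      Real.norm_eq_abs, mul_one]
  have habs : |ε₀/2| < ε₀ := by rw [abs_of_pos (by linarith)]; linarith
  have habs' : |-(ε₀/2)| < ε₀ := by rw [abs_neg]; exact habs
  have hcoord : ∀ (i : Fin 2) (c : ℝ),
      (p + c • EuclideanSpace.single i (1:ℝ)) i = p i + c := by
    intro i c
    simp [PiLp.add_apply, PiLp.smul_apply, EuclideanSpace.single_apply]
  have hp00 : 0 < p 0 := by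
    have h := (hmemD _ (by rw [hdist 0 (-(ε₀/2))]; exact habs')).1.1
    rw [hcoord 0 (-(ε₀/2))] at h
    linarith
  have hp0a : p 0 < a := by
    have h := (hmemD _ (by rw [hdist 0 (ε₀/2)]; exact habs)).1.2
    rw [hcoord 0 (ε₀/2)] at h
    linarith
  have hp10 : 0 < p 1 := by
    have h := (hmemD _ (by rw [hdist 1 (-(ε₀/2))]; exact habs')).2.1
    rw [hcoord 1 (-(ε₀/2))] at h
    linarith
  have hp1b : p 1 < b := by
    have h := (hmemD _ (by rw [hdist 1 (ε₀/2)]; exact habs)).2.2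
    rw [hcoord 1 (ε₀/2)] at h
    linarith
  -- the Hessian form at p
  set e0 : EuclideanSpace ℝ (Fin 2) := EuclideanSpace.single 0 1 with he0
  set e1 : EuclideanSpace ℝ (Fin 2) := EuclideanSpace.single 1 1 with he1
  have hform : ∀ (x : EuclideanSpace ℝ (Fin 2)) (s t : ℝ),
      fderiv ℝ (fderiv ℝ f) x (s • e0 + t • e1) (s • e0 + t • e1)
        = (fderiv ℝ (fderiv ℝ f) x e0 e0) * s^2
          + (fderiv ℝ (fderiv ℝ f) x e0 e1 + fderiv ℝ (fderiv ℝ f) x e1 e0) * (s*t)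
          + (fderiv ℝ (fderiv ℝ f) x e1 e1) * t^2 := by
    intro x s t
    simp only [map_add, map_smul, ContinuousLinearMap.add_apply,
      ContinuousLinearMap.smul_apply, smul_eq_mul]
    ring
  set A := fderiv ℝ (fderiv ℝ f) p e0 e0 with hA
  set B1 := fderiv ℝ (fderiv ℝ f) p e0 e1 with hB1
  set B2 := fderiv ℝ (fderiv ℝ f) p e1 e0 with hB2
  set C := fderiv ℝ (fderiv ℝ f) p e1 e1 with hC
  have hab2 : (0:ℝ) < (a*b)^2 := by positivity
  have hdisc : (A*a^2) * (C*b^2) - ((B1+B2)/2*a*b)^2 < 0 := by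
    have key : (A*C - B1*B2) * (a*b)^2 < 0 := mul_neg_of_neg_of_pos hsaddle hab2
    linarith [key, sq_nonneg ((B1-B2)*(a*b))]
  obtain ⟨kp, lp, hkp⟩ := exists_int_pos (A*a^2) ((B1+B2)/2*a*b) (C*b^2) hdisc
  obtain ⟨km, lm, hkm⟩ := exists_int_neg (A*a^2) ((B1+B2)/2*a*b) (C*b^2) hdisc
  have hupQ : 0 < fderiv ℝ (fderiv ℝ f) p (((kp:ℝ)*a) • e0 + ((lp:ℝ)*b) • e1)
      (((kp:ℝ)*a) • e0 + ((lp:ℝ)*b) • e1) := by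
    rw [hform, ← hA, ← hB1, ← hB2, ← hC]
    have heq : A*((kp:ℝ)*a)^2 + (B1+B2)*(((kp:ℝ)*a)*((lp:ℝ)*b)) + C*((lp:ℝ)*b)^2
        = A*a^2*(kp:ℝ)^2 + 2*((B1+B2)/2*a*b)*((kp:ℝ)*(lp:ℝ)) + C*b^2*(lp:ℝ)^2 := by ring
    rw [heq]
    exact hkp
  have humQ : fderiv ℝ (fderiv ℝ f) p (((km:ℝ)*a) • e0 + ((lm:ℝ)*b) • e1)
      (((km:ℝ)*a) • e0 + ((lm:ℝ)*b) • e1) < 0 := by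
    rw [hform, ← hA, ← hB1, ← hB2, ← hC]
    have heq : A*((km:ℝ)*a)^2 + (B1+B2)*(((km:ℝ)*a)*((lm:ℝ)*b)) + C*((lm:ℝ)*b)^2
        = A*a^2*(km:ℝ)^2 + 2*((B1+B2)/2*a*b)*((km:ℝ)*(lm:ℝ)) + C*b^2*(lm:ℝ)^2 := by ring
    rw [heq]
    exact hkm
  have evalCont : ∀ u : EuclideanSpace ℝ (Fin 2),
      ContinuousAt (fun x => fderiv ℝ (fderiv ℝ f) x u u) p := by
    intro u
    have h1 : Continuous fun M : EuclideanSpace ℝ (Fin 2) →L[ℝ]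
        (EuclideanSpace ℝ (Fin 2) →L[ℝ] ℝ) => (M u) u :=
      ((ContinuousLinearMap.apply ℝ ℝ u).comp
        (ContinuousLinearMap.apply ℝ (EuclideanSpace ℝ (Fin 2) →L[ℝ] ℝ) u)).continuous
    exact h1.continuousAt.comp (hD2cont.continuousAt (hVopen.mem_nhds hp))
  obtain ⟨εp, hεp, hballp⟩ := Metric.mem_nhds_iff.mp
    ((evalCont (((kp:ℝ)*a) • e0 + ((lp:ℝ)*b) • e1)) (Ioi_mem_nhds hupQ))
  obtain ⟨εm, hεm, hballm⟩ := Metric.mem_nhds_iff.mp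
    ((evalCont (((km:ℝ)*a) • e0 + ((lm:ℝ)*b) • e1)) (Iio_mem_nhds humQ))
  set ρ : ℝ := min ε₀ (min εp εm) with hρdef
  have hρ : 0 < ρ := lt_min hε₀ (lt_min hεp hεm)
  have hsubρ : Metric.ball p ρ ⊆ interior D := fun x hx =>
    hball₀ (Metric.ball_subset_ball (min_le_left _ _) hx)
  have hsubp : Metric.ball p ρ ⊆ Metric.ball p εp :=
    Metric.ball_subset_ball (le_trans (min_le_right _ _) (min_le_left _ _))
  have hsubm : Metric.ball p ρ ⊆ Metric.ball p εm :=
    Metric.ball_subset_ball (le_trans (min_le_right _ _) (min_le_right _ _))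
  have hQp : ∀ x ∈ Metric.ball p ρ, 0 < fderiv ℝ (fderiv ℝ f) x
      (((kp:ℝ)*a) • e0 + ((lp:ℝ)*b) • e1) (((kp:ℝ)*a) • e0 + ((lp:ℝ)*b) • e1) := by
    intro x hx
    exact hballp (hsubp hx)
  have hQm : ∀ x ∈ Metric.ball p ρ, fderiv ℝ (fderiv ℝ f) x
      (((km:ℝ)*a) • e0 + ((lm:ℝ)*b) • e1) (((km:ℝ)*a) • e0 + ((lm:ℝ)*b) • e1) < 0 := by
    intro x hx
    exact hballm (hsubm hx)
  set r : ℕ := max (max kp.natAbs lp.natAbs) (max km.natAbs lm.natAbs) with hrdef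
  have hkpr : kp.natAbs ≤ r := le_trans (le_max_left _ _) (le_max_left _ _)
  have hlpr : lp.natAbs ≤ r := le_trans (le_max_right _ _) (le_max_left _ _)
  have hkmr : km.natAbs ≤ r := le_trans (le_max_left _ _) (le_max_right _ _)
  have hlmr : lm.natAbs ≤ r := le_trans (le_max_right _ _) (le_max_right _ _)
  set δ : ℝ := min (ρ/8) (min (min (p 0/2) ((a - p 0)/2)) (min (p 1/2) ((b - p 1)/2)))
    with hδdef
  have hδ : 0 < δ := by
    apply lt_min (by linarith)
    apply lt_min (lt_min (by linarith) (by linarith)) (lt_min (by linarith) (by linarith))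
  have hδρ : δ ≤ ρ/8 := min_le_left _ _
  have hδp0 : δ ≤ p 0/2 :=
    le_trans (min_le_right _ _) (le_trans (min_le_left _ _) (min_le_left _ _))
  have hδa : δ ≤ (a - p 0)/2 :=
    le_trans (min_le_right _ _) (le_trans (min_le_left _ _) (min_le_right _ _))
  have hδp1 : δ ≤ p 1/2 :=
    le_trans (min_le_right _ _) (le_trans (min_le_right _ _) (min_le_left _ _))
  have hδb : δ ≤ (b - p 1)/2 :=
    le_trans (min_le_right _ _) (le_trans (min_le_right _ _) (min_le_right _ _))
  set U : Set (EuclideanSpace ℝ (Fin 2)) := {v | |v 0 - p 0| < δ ∧ |v 1 - p 1| < δ}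
    with hUdef
  have hU : U ∈ nhds p := by
    have c0 : Continuous fun v : EuclideanSpace ℝ (Fin 2) => v 0 :=
      (EuclideanSpace.proj (0 : Fin 2)).continuous
    have c1 : Continuous fun v : EuclideanSpace ℝ (Fin 2) => v 1 :=
      (EuclideanSpace.proj (1 : Fin 2)).continuous
    have hopen : IsOpen U := by
      apply IsOpen.inter
      · exact isOpen_lt ((c0.sub continuous_const).abs) continuous_const
      · exact isOpen_lt ((c1.sub continuous_const).abs) continuous_const
    refine hopen.mem_nhds ?_
    constructor <;> simp [hδ]
  set M : ℝ := 8*(r:ℝ)*(a+b)/ρ + 2*a*(r:ℝ)/(p 0) + 2*a*(r:ℝ)/(a - p 0)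
    + 2*b*(r:ℝ)/(p 1) + 2*b*(r:ℝ)/(b - p 1) with hMdef
  have hrcast : (0:ℝ) ≤ (r:ℝ) := Nat.cast_nonneg r
  have hM1 : (0:ℝ) ≤ 8*(r:ℝ)*(a+b)/ρ :=
    div_nonneg (mul_nonneg (mul_nonneg (by norm_num) hrcast) (by linarith)) hρ.le
  have hM2 : (0:ℝ) ≤ 2*a*(r:ℝ)/(p 0) :=
    div_nonneg (mul_nonneg (by linarith) hrcast) hp00.le
  have hM3 : (0:ℝ) ≤ 2*a*(r:ℝ)/(a - p 0) :=
    div_nonneg (mul_nonneg (by linarith) hrcast) (by linarith)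
  have hM4 : (0:ℝ) ≤ 2*b*(r:ℝ)/(p 1) :=
    div_nonneg (mul_nonneg (by linarith) hrcast) hp10.le
  have hM5 : (0:ℝ) ≤ 2*b*(r:ℝ)/(b - p 1) :=
    div_nonneg (mul_nonneg (by linarith) hrcast) (by linarith)
  refine ⟨U, hU, r, ⌈M⌉₊ + 1, ?_⟩
  intro n hn i j hi hj hqU
  have hnpos : 0 < n := lt_of_lt_of_le (Nat.succ_pos _) hn
  have nR : (0:ℝ) < n := by exact_mod_cast hnpos
  have hceil : M ≤ (n:ℝ) := by
    calc M ≤ (⌈M⌉₊ : ℝ) := Nat.le_ceil M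
      _ ≤ (n : ℝ) := by exact_mod_cast le_trans (Nat.le_succ _) hn
  have hn1 : 8*(r:ℝ)*(a+b)/ρ ≤ n := by rw [hMdef] at hceil; linarith
  have hn2 : 2*a*(r:ℝ)/(p 0) ≤ n := by rw [hMdef] at hceil; linarith
  have hn3 : 2*a*(r:ℝ)/(a - p 0) ≤ n := by rw [hMdef] at hceil; linarith
  have hn4 : 2*b*(r:ℝ)/(p 1) ≤ n := by rw [hMdef] at hceil; linarith
  have hn5 : 2*b*(r:ℝ)/(b - p 1) ≤ n := by rw [hMdef] at hceil; linarith
  have hq0' : |(i:ℝ)*a/n - p 0| < δ := by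
    have h := hqU.1
    rwa [grid_apply_zero] at h
  have hq1' : |(j:ℝ)*b/n - p 1| < δ := by
    have h := hqU.2
    rwa [grid_apply_one] at h
  -- index bounds
  have hri : (r:ℝ) ≤ i := by
    have h1 : p 0 - δ < (i:ℝ)*a/n := by linarith [(abs_lt.mp hq0').1]
    have h2 : p 0/2 ≤ (i:ℝ)*a/n := by linarith
    have h3 : p 0/2 * n ≤ (i:ℝ)*a := (le_div_iff₀ nR).mp h2
    have h4 : 2*a*(r:ℝ) ≤ n * p 0 := (div_le_iff₀ hp00).mp hn2
    have h5 : (r:ℝ)*a ≤ (i:ℝ)*a := by linarith [h3, h4]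
    exact (mul_le_mul_iff_of_pos_right ha).mp h5
  have hini : (i:ℝ) + r ≤ n := by
    have h1 : (i:ℝ)*a/n < p 0 + δ := by linarith [(abs_lt.mp hq0').2]
    have h2 : (i:ℝ)*a/n ≤ (a + p 0)/2 := by linarith
    have h3 : (i:ℝ)*a ≤ (a + p 0)/2 * n := (div_le_iff₀ nR).mp h2
    have h4 : 2*a*(r:ℝ) ≤ n * (a - p 0) := (div_le_iff₀ (by linarith)).mp hn3
    have h5 : ((i:ℝ) + r)*a ≤ (n:ℝ)*a := by linarith [h3, h4]
    exact (mul_le_mul_iff_of_pos_right ha).mp h5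
  have hrj : (r:ℝ) ≤ j := by
    have h1 : p 1 - δ < (j:ℝ)*b/n := by linarith [(abs_lt.mp hq1').1]
    have h2 : p 1/2 ≤ (j:ℝ)*b/n := by linarith
    have h3 : p 1/2 * n ≤ (j:ℝ)*b := (le_div_iff₀ nR).mp h2
    have h4 : 2*b*(r:ℝ) ≤ n * p 1 := (div_le_iff₀ hp10).mp hn4
    have h5 : (r:ℝ)*b ≤ (j:ℝ)*b := by linarith [h3, h4]
    exact (mul_le_mul_iff_of_pos_right hb).mp h5
  have hinj : (j:ℝ) + r ≤ n := by
    have h1 : (j:ℝ)*b/n < p 1 + δ := by linarith [(abs_lt.mp hq1').2]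
    have h2 : (j:ℝ)*b/n ≤ (b + p 1)/2 := by linarith
    have h3 : (j:ℝ)*b ≤ (b + p 1)/2 * n := (div_le_iff₀ nR).mp h2
    have h4 : 2*b*(r:ℝ) ≤ n * (b - p 1) := (div_le_iff₀ (by linarith)).mp hn5
    have h5 : ((j:ℝ) + r)*b ≤ (n:ℝ)*b := by linarith [h3, h4]
    exact (mul_le_mul_iff_of_pos_right hb).mp h5
  have hriN : r ≤ i := by exact_mod_cast hri
  have hiniN : i + r ≤ n := by exact_mod_cast hini
  have hrjN : r ≤ j := by exact_mod_cast hrj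
  have hinjN : j + r ≤ n := by exact_mod_cast hinj
  -- distance from grid point to p
  have hqmp : ‖gridPt a b n i j - p‖ < 2*δ := by
    have h0 : (gridPt a b n i j - p) 0 = (i:ℝ)*a/n - p 0 := by
      rw [PiLp.sub_apply, grid_apply_zero]
    have h1 : (gridPt a b n i j - p) 1 = (j:ℝ)*b/n - p 1 := by
      rw [PiLp.sub_apply, grid_apply_one]
    calc ‖gridPt a b n i j - p‖ ≤ |(gridPt a b n i j - p) 0| + |(gridPt a b n i j - p) 1| :=
        norm_le_coords _
      _ < 2*δ := by rw [h0, h1]; linarith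
  -- generic direction handler (positive direction: find a larger value)
  have dirPos : ∀ k l : ℤ, k.natAbs ≤ r → l.natAbs ≤ r →
      (∀ x ∈ Metric.ball p ρ, 0 < fderiv ℝ (fderiv ℝ f) x
        (((k:ℝ)*a) • e0 + ((l:ℝ)*b) • e1) (((k:ℝ)*a) • e0 + ((l:ℝ)*b) • e1)) →
      ∃ l' m' : ℕ, l' ≤ n ∧ m' ≤ n ∧ |(l':ℤ) - i| ≤ r ∧ |(m':ℤ) - j| ≤ r ∧
        f (gridPt a b n i j) < f (gridPt a b n l' m') := by
    intro k l hk hl hQpos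
    set u : EuclideanSpace ℝ (Fin 2) := ((k:ℝ)*a) • e0 + ((l:ℝ)*b) • e1 with hu
    set w : EuclideanSpace ℝ (Fin 2) := ((k:ℝ)*a/n) • e0 + ((l:ℝ)*b/n) • e1 with hw
    have hwu : w = (n:ℝ)⁻¹ • u := by
      rw [hw, hu, smul_add, smul_smul, smul_smul,
        show (n:ℝ)⁻¹ * ((k:ℝ)*a) = (k:ℝ)*a/n by ring,
        show (n:ℝ)⁻¹ * ((l:ℝ)*b) = (l:ℝ)*b/n by ring]
    have hkZ : |k| ≤ (r:ℤ) := by rw [Int.abs_eq_natAbs]; exact_mod_cast hk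
    have hlZ : |l| ≤ (r:ℤ) := by rw [Int.abs_eq_natAbs]; exact_mod_cast hl
    have hkR : |(k:ℝ)| ≤ (r:ℝ) := by rw [← Int.cast_abs]; exact_mod_cast hkZ
    have hlR : |(l:ℝ)| ≤ (r:ℝ) := by rw [← Int.cast_abs]; exact_mod_cast hlZ
    have hwnorm : ‖w‖ ≤ ρ/8 := by
      have h1 : ‖w‖ ≤ |(k:ℝ)*a/n| + |(l:ℝ)*b/n| := by
        rw [hw]
        refine le_trans (norm_add_le _ _) ?_
        rw [norm_smul, norm_smul, he0, he1, EuclideanSpace.norm_single,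
          EuclideanSpace.norm_single, norm_one, Real.norm_eq_abs, Real.norm_eq_abs]
        simp
      have h2 : |(k:ℝ)*a/n| = |(k:ℝ)| * a/n := by
        rw [abs_div, abs_mul, abs_of_pos ha, abs_of_pos nR]
      have h3 : |(l:ℝ)*b/n| = |(l:ℝ)| * b/n := by
        rw [abs_div, abs_mul, abs_of_pos hb, abs_of_pos nR]
      have h4 : 8*(r:ℝ)*(a+b) ≤ n * ρ := (div_le_iff₀ hρ).mp hn1
      have h5 : |(k:ℝ)| * a/n + |(l:ℝ)| * b/n ≤ ρ/8 := by
        rw [← add_div, div_le_div_iff₀ nR (by norm_num : (0:ℝ) < 8)]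
        linarith [mul_le_mul_of_nonneg_right hkR ha.le,
          mul_le_mul_of_nonneg_right hlR hb.le, h4]
      rw [h2, h3] at h1
      linarith
    have hqp : ‖gridPt a b n i j - p‖ + 2*‖w‖ < ρ := by
      linarith [hqmp, hwnorm, hδρ, hρ]
    have hQw : ∀ x ∈ Metric.ball p ρ, 0 < fderiv ℝ (fderiv ℝ f) x w w := by
      intro x hx
      have heq : fderiv ℝ (fderiv ℝ f) x w w
          = (n:ℝ)⁻¹ * ((n:ℝ)⁻¹ * fderiv ℝ (fderiv ℝ f) x u u) := by
        rw [hwu]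
        simp [map_smul, ContinuousLinearMap.smul_apply, smul_eq_mul]
      rw [heq]
      exact mul_pos (inv_pos.mpr nR) (mul_pos (inv_pos.mpr nR) (hQpos x hx))
    rcases saddle_dir f p (gridPt a b n i j) w ρ (fun x hx => hf1 x (hsubρ hx))
      (fun x hx => hf2 x (hsubρ hx)) hQw hqp with hc | hc
    · refine ⟨((i:ℤ)+k).toNat, ((j:ℤ)+l).toNat, by omega, by omega, ?_, ?_, ?_⟩
      · rw [abs_le]; omega
      · rw [abs_le]; omega
      · have hg := grid_shift a b n i j k l (by omega) (by omega)
        rw [← he0, ← he1, ← hw] at hg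
        rw [hg]; exact hc
    · refine ⟨((i:ℤ)+(-k)).toNat, ((j:ℤ)+(-l)).toNat, by omega, by omega, ?_, ?_, ?_⟩
      · rw [abs_le]; omega
      · rw [abs_le]; omega
      · have hg := grid_shift a b n i j (-k) (-l) (by omega) (by omega)
        rw [← he0, ← he1] at hg
        have hw2 : ((((-k) : ℤ):ℝ)*a/n) • e0 + ((((-l) : ℤ):ℝ)*b/n) • e1 = -w := by
          rw [hw]
          push_cast
          module
        rw [hw2] at hg
        rw [sub_eq_add_neg] at hc
        rw [hg]; exact hc
  -- negative direction: find a smaller value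
  have dirNeg : ∀ k l : ℤ, k.natAbs ≤ r → l.natAbs ≤ r →
      (∀ x ∈ Metric.ball p ρ, fderiv ℝ (fderiv ℝ f) x
        (((k:ℝ)*a) • e0 + ((l:ℝ)*b) • e1) (((k:ℝ)*a) • e0 + ((l:ℝ)*b) • e1) < 0) →
      ∃ l' m' : ℕ, l' ≤ n ∧ m' ≤ n ∧ |(l':ℤ) - i| ≤ r ∧ |(m':ℤ) - j| ≤ r ∧
        f (gridPt a b n l' m') < f (gridPt a b n i j) := by
    intro k l hk hl hQneg
    set u : EuclideanSpace ℝ (Fin 2) := ((k:ℝ)*a) • e0 + ((l:ℝ)*b) • e1 with hu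
    set w : EuclideanSpace ℝ (Fin 2) := ((k:ℝ)*a/n) • e0 + ((l:ℝ)*b/n) • e1 with hw
    have hwu : w = (n:ℝ)⁻¹ • u := by
      rw [hw, hu, smul_add, smul_smul, smul_smul,
        show (n:ℝ)⁻¹ * ((k:ℝ)*a) = (k:ℝ)*a/n by ring,
        show (n:ℝ)⁻¹ * ((l:ℝ)*b) = (l:ℝ)*b/n by ring]
    have hkZ : |k| ≤ (r:ℤ) := by rw [Int.abs_eq_natAbs]; exact_mod_cast hk
    have hlZ : |l| ≤ (r:ℤ) := by rw [Int.abs_eq_natAbs]; exact_mod_cast hl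
    have hkR : |(k:ℝ)| ≤ (r:ℝ) := by rw [← Int.cast_abs]; exact_mod_cast hkZ
    have hlR : |(l:ℝ)| ≤ (r:ℝ) := by rw [← Int.cast_abs]; exact_mod_cast hlZ
    have hwnorm : ‖w‖ ≤ ρ/8 := by
      have h1 : ‖w‖ ≤ |(k:ℝ)*a/n| + |(l:ℝ)*b/n| := by
        rw [hw]
        refine le_trans (norm_add_le _ _) ?_
        rw [norm_smul, norm_smul, he0, he1, EuclideanSpace.norm_single,
          EuclideanSpace.norm_single, norm_one, Real.norm_eq_abs, Real.norm_eq_abs]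
        simp
      have h2 : |(k:ℝ)*a/n| = |(k:ℝ)| * a/n := by
        rw [abs_div, abs_mul, abs_of_pos ha, abs_of_pos nR]
      have h3 : |(l:ℝ)*b/n| = |(l:ℝ)| * b/n := by
        rw [abs_div, abs_mul, abs_of_pos hb, abs_of_pos nR]
      have h4 : 8*(r:ℝ)*(a+b) ≤ n * ρ := (div_le_iff₀ hρ).mp hn1
      have h5 : |(k:ℝ)| * a/n + |(l:ℝ)| * b/n ≤ ρ/8 := by
        rw [← add_div, div_le_div_iff₀ nR (by norm_num : (0:ℝ) < 8)]
        linarith [mul_le_mul_of_nonneg_right hkR ha.le,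
          mul_le_mul_of_nonneg_right hlR hb.le, h4]
      rw [h2, h3] at h1
      linarith
    have hqp : ‖gridPt a b n i j - p‖ + 2*‖w‖ < ρ := by
      linarith [hqmp, hwnorm, hδρ, hρ]
    have hQw : ∀ x ∈ Metric.ball p ρ, fderiv ℝ (fderiv ℝ f) x w w < 0 := by
      intro x hx
      have heq : fderiv ℝ (fderiv ℝ f) x w w
          = (n:ℝ)⁻¹ * ((n:ℝ)⁻¹ * fderiv ℝ (fderiv ℝ f) x u u) := by
        rw [hwu]
        simp [map_smul, ContinuousLinearMap.smul_apply, smul_eq_mul]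
      rw [heq]
      have hinv : 0 < (n:ℝ)⁻¹ := inv_pos.mpr nR
      exact mul_neg_of_pos_of_neg hinv (mul_neg_of_pos_of_neg hinv (hQneg x hx))
    rcases saddle_dir_neg f p (gridPt a b n i j) w ρ (fun x hx => hf1 x (hsubρ hx))
      (fun x hx => hf2 x (hsubρ hx)) hQw hqp with hc | hc
    · refine ⟨((i:ℤ)+k).toNat, ((j:ℤ)+l).toNat, by omega, by omega, ?_, ?_, ?_⟩
      · rw [abs_le]; omega
      · rw [abs_le]; omega
      · have hg := grid_shift a b n i j k l (by omega) (by omega)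
        rw [← he0, ← he1, ← hw] at hg
        rw [hg]; exact hc
    · refine ⟨((i:ℤ)+(-k)).toNat, ((j:ℤ)+(-l)).toNat, by omega, by omega, ?_, ?_, ?_⟩
      · rw [abs_le]; omega
      · rw [abs_le]; omega
      · have hg := grid_shift a b n i j (-k) (-l) (by omega) (by omega)
        rw [← he0, ← he1] at hg
        have hw2 : ((((-k) : ℤ):ℝ)*a/n) • e0 + ((((-l) : ℤ):ℝ)*b/n) • e1 = -w := by
          rw [hw]
          push_cast
          module
        rw [hw2] at hg
        rw [sub_eq_add_neg] at hc
        rw [hg]; exact hc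
  exact ⟨dirNeg km lm hkmr hlmr hQm, dirPos kp lp hkpr hlpr hQp⟩
end
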